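/- For every positive integer $n$ there exists a constant $k(n)$ such that every finite-order element of $\mathrm{GL}_n(\mathbb{Z})$ has order at most $k(n)$. -/

import Mathlib

/-!
Minkowski's argument: the kernel of reduction `GL_n(ℤ) → GL_n(ℤ/3)` is torsion-free, so the
order of a finite-order element divides `|GL_n(ℤ/3)|`. For torsion-freeness, let `x = M - 1` be
divisible by `p^(k+1)` (`p` an odd prime) with `(x + 1)^q = 1`, `q` prime. The binomial expansion
gives `q x = -∑_{m ≥ 2} C(q, m) x^m`, whose right-hand side is divisible by `p^(k+2)`, or by
`p^(k+3)` when `q = p` (as `p ∣ C(p, m)` for `1 < m < p`, and `p ≥ 3` for `m = p`). Hence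
`p^(k+2) ∣ x`, so `x` is divisible by every power of `p`, so `x = 0`.
-/

open Finset

instance Matrix.instIsAddTorsionFree {m n α : Type*} [AddMonoid α] [IsAddTorsionFree α] :
    IsAddTorsionFree (Matrix m n α) :=
  inferInstanceAs (IsAddTorsionFree (m → n → α))

theorem add_one_pow_eq_one_add_mul_add_sum {R : Type*} [Semiring R] (x : R) (n : ℕ) :
    (x + 1) ^ n = 1 + n * x + ∑ m ∈ Ico 2 (n + 1), x ^ m * n.choose m := by
  rcases n with _ | n
  · simp
  rw [(Commute.one_right x).add_pow, range_eq_Ico, sum_eq_sum_Ico_succ_bot (by omega),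
    sum_eq_sum_Ico_succ_bot (by omega), (Nat.cast_commute _ x).eq]
  simp [add_assoc]

section NatCastDvd

variable {A : Type*} [Ring A] {p : ℕ} {x : A}

theorem natCast_pow_mul_dvd_pow {a : ℕ} (h : (p : A) ^ a ∣ x) (m : ℕ) :
    (p : A) ^ (a * m) ∣ x ^ m := by
  obtain ⟨y, rfl⟩ := h
  rw [((Nat.cast_commute p y).pow_left a).mul_pow, pow_mul]
  exact dvd_mul_right _ _

theorem natCast_pow_succ_dvd_mul_natCast {a d : ℕ} (hx : (p : A) ^ a ∣ x) (hd : p ∣ d) :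
    (p : A) ^ (a + 1) ∣ x * d := by
  obtain ⟨y, rfl⟩ := hx
  obtain ⟨c, rfl⟩ := hd
  refine ⟨y * c, ?_⟩
  rw [Nat.cast_mul, pow_succ, mul_assoc, mul_assoc, ← mul_assoc y, ← (Nat.cast_commute p y).eq,
    mul_assoc]

theorem natCast_dvd_of_dvd_natCast_mul {d q : ℕ} (hdq : d.Coprime q) (h : (d : A) ∣ q * x) :
    (d : A) ∣ x := by
  obtain ⟨u, v, huv⟩ := Nat.isCoprime_iff_coprime.mpr hdq
  obtain ⟨c, hc⟩ := h
  have huv' : (u : A) * d + v * q = 1 := by exact_mod_cast congrArg (Int.cast : ℤ → A) huv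
  refine ⟨u * x + v * c, ?_⟩
  calc x = ((u : A) * d + v * q) * x := by rw [huv', one_mul]
    _ = d * (u * x + v * c) := by
      rw [add_mul, mul_assoc, mul_assoc, hc, mul_add, ← mul_assoc, ← mul_assoc (v : A),
        (Int.cast_commute u (d : A)).eq, (Int.cast_commute v (d : A)).eq, mul_assoc, mul_assoc]

theorem natCast_pow_succ_dvd_of_add_one_pow_eq_one [IsAddTorsionFree A] (hp : p.Prime)
    (hp2 : p ≠ 2) {q : ℕ} (hq : q.Prime) (hx : (x + 1) ^ q = 1) {k : ℕ}
    (hk : (p : A) ^ (k + 1) ∣ x) : (p : A) ^ (k + 2) ∣ x := by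
  have hsum : (q : A) * x = -∑ m ∈ Ico 2 (q + 1), x ^ m * q.choose m := by
    rw [add_one_pow_eq_one_add_mul_add_sum] at hx
    linear_combination (norm := abel) hx
  rcases eq_or_ne q p with hqp | hqp
  · subst q
    have hdvd : (p : A) * p ^ (k + 2) ∣ p * x := by
      rw [← pow_succ', hsum, dvd_neg]
      refine dvd_sum fun m hm => ?_
      obtain ⟨hm2, hmq⟩ := mem_Ico.mp hm
      rcases (Nat.lt_succ_iff.mp hmq).lt_or_eq with hmq | hmp
      · refine (pow_dvd_pow _ ?_).trans <| natCast_pow_succ_dvd_mul_natCast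
          (natCast_pow_mul_dvd_pow hk m) (hp.dvd_choose_self (by omega) hmq)
        nlinarith
      · subst m
        rw [Nat.choose_self, Nat.cast_one, mul_one]
        refine (pow_dvd_pow _ ?_).trans (natCast_pow_mul_dvd_pow hk p)
        nlinarith [lt_of_le_of_ne hp.two_le (Ne.symm hp2)]
    have hreg : IsLeftRegular (p : A) := fun y z h =>
      IsAddTorsionFree.nsmul_right_injective hp.ne_zero (by simpa only [nsmul_eq_mul] using h)
    exact hreg.dvd_cancel_left.mp hdvd
  · have hdvd : (p : A) ^ (k + 2) ∣ q * x := by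
      rw [hsum, dvd_neg]
      refine dvd_sum fun m hm =>
        ((pow_dvd_pow _ ?_).trans (natCast_pow_mul_dvd_pow hk m)).mul_right _
      nlinarith [(mem_Ico.mp hm).1]
    have hcop : (p ^ (k + 2)).Coprime q := ((Nat.coprime_primes hp hq).mpr hqp.symm).pow_left _
    exact_mod_cast natCast_dvd_of_dvd_natCast_mul hcop (by exact_mod_cast hdvd)

end NatCastDvd

theorem Subgroup.eq_one_of_isOfFinOrder {G : Type*} [Group G] {K : Subgroup G}
    (hK : ∀ y ∈ K, ∀ q : ℕ, q.Prime → y ^ q = 1 → y = 1) {x : G} (hxK : x ∈ K)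
    (hx : IsOfFinOrder x) : x = 1 := by
  by_contra hx1
  obtain ⟨q, hq, hqx⟩ := Nat.exists_prime_and_dvd (orderOf_eq_one_iff.not.mpr hx1)
  have hord := orderOf_pow_orderOf_div hx.orderOf_pos.ne' hqx
  have hpow := pow_orderOf_eq_one (x ^ (orderOf x / q))
  rw [hord] at hpow
  rw [hK _ (K.pow_mem hxK _) q hq hpow, orderOf_one] at hord
  exact hq.one_lt.ne hord

theorem MonoidHom.orderOf_dvd_card_of_ker_torsionFree {G H : Type*} [Group G] [Group H]
    [Fintype H] (f : G →* H) (hf : ∀ x ∈ f.ker, IsOfFinOrder x → x = 1) {x : G}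
    (hx : IsOfFinOrder x) : orderOf x ∣ Fintype.card H :=
  orderOf_dvd_of_pow_eq_one <| hf _ (by rw [mem_ker, map_pow, pow_card_eq_one]) hx.pow

namespace Matrix

variable {ι : Type*} [Fintype ι] [DecidableEq ι]

theorem natCast_dvd_iff {d : ℕ} {N : Matrix ι ι ℤ} :
    (d : Matrix ι ι ℤ) ∣ N ↔ ∀ i j, (d : ℤ) ∣ N i j := by
  constructor
  · rintro ⟨B, rfl⟩ i j
    rw [← nsmul_eq_mul, smul_apply, nsmul_eq_mul]
    exact dvd_mul_right _ _
  · intro h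
    choose B hB using h
    refine ⟨of B, ext fun i j => ?_⟩
    rw [← nsmul_eq_mul, smul_apply, nsmul_eq_mul, of_apply, hB]

theorem eq_zero_of_forall_natCast_pow_dvd {p : ℕ} (hp : 1 < p) {N : Matrix ι ι ℤ}
    (h : ∀ k, (p : Matrix ι ι ℤ) ^ k ∣ N) : N = 0 := by
  ext i j
  rw [zero_apply]
  by_contra hij
  have hp' : (p : ℤ).natAbs ≠ 1 := by rw [Int.natAbs_natCast]; omega
  obtain ⟨k, hk⟩ := Int.finiteMultiplicity_iff.mpr ⟨hp', hij⟩
  exact hk <| by exact_mod_cast natCast_dvd_iff.mp (by exact_mod_cast h (k + 1)) i j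

theorem eq_one_of_pow_eq_one_of_natCast_dvd_sub_one {p q : ℕ} (hp : p.Prime) (hp2 : p ≠ 2)
    (hq : q.Prime) {M : Matrix ι ι ℤ} (hMq : M ^ q = 1) (hM : (p : Matrix ι ι ℤ) ∣ M - 1) :
    M = 1 := by
  have hx : (M - 1 + 1) ^ q = 1 := by rwa [sub_add_cancel]
  have hdvd (k : ℕ) : (p : Matrix ι ι ℤ) ^ (k + 1) ∣ M - 1 := by
    induction k with
    | zero => simpa using hM
    | succ k ih => exact natCast_pow_succ_dvd_of_add_one_pow_eq_one hp hp2 hq hx ih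
  exact sub_eq_zero.mp <| eq_zero_of_forall_natCast_pow_dvd hp.one_lt fun k =>
    (pow_dvd_pow _ k.le_succ).trans (hdvd k)

namespace GeneralLinearGroup

theorem natCast_dvd_sub_one_of_map_eq_one {p : ℕ} {M : GL ι ℤ}
    (hM : map (Int.castRingHom (ZMod p)) M = 1) :
    (p : Matrix ι ι ℤ) ∣ (M : Matrix ι ι ℤ) - 1 :=
  natCast_dvd_iff.mpr fun i j => by
    have hMij := congrArg (fun g : GL ι (ZMod p) => (g : Matrix ι ι (ZMod p)) i j) hM
    rw [← ZMod.intCast_zmod_eq_zero_iff_dvd, sub_apply, Int.cast_sub, sub_eq_zero]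
    simpa [map_apply, one_apply, apply_ite] using hMij

theorem eq_one_of_isOfFinOrder_of_map_eq_one {p : ℕ} (hp : p.Prime) (hp2 : p ≠ 2) {M : GL ι ℤ}
    (hM_fin : IsOfFinOrder M) (hM : map (Int.castRingHom (ZMod p)) M = 1) : M = 1 := by
  refine Subgroup.eq_one_of_isOfFinOrder (fun y hy q hq hyq => ?_)
    (MonoidHom.mem_ker.mpr hM) hM_fin
  exact Units.ext <| eq_one_of_pow_eq_one_of_natCast_dvd_sub_one hp hp2 hq
    (by simpa using congrArg Units.val hyq)
    (natCast_dvd_sub_one_of_map_eq_one (MonoidHom.mem_ker.mp hy))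

end GeneralLinearGroup

end Matrix

theorem stmt_1_general (n : ℕ) :
    ∃ k : ℕ, ∀ M : Matrix.GeneralLinearGroup (Fin n) ℤ,
      IsOfFinOrder M → orderOf M ≤ k := by
  let reduce := Matrix.GeneralLinearGroup.map (n := Fin n) (Int.castRingHom (ZMod 3))
  refine ⟨Fintype.card (GL (Fin n) (ZMod 3)), fun M hM => Nat.le_of_dvd Fintype.card_pos ?_⟩
  refine reduce.orderOf_dvd_card_of_ker_torsionFree (fun y hy hy_fin => ?_) hM
  exact Matrix.GeneralLinearGroup.eq_one_of_isOfFinOrder_of_map_eq_one Nat.prime_three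
    (by norm_num) hy_fin (MonoidHom.mem_ker.mp hy)

/-- For every positive `n` there is a constant `k n` bounding the
order of every finite-order element of `GL_n(ℤ)`. -/
theorem stmt_1 (n : ℕ) (hn : 0 < n) :
    ∃ k : ℕ, ∀ M : Matrix.GeneralLinearGroup (Fin n) ℤ,
      IsOfFinOrder M → orderOf M ≤ k :=
  stmt_1_general n
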